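/- arXiv:1009.3566 — 2 statements merged into one kernel-verified Lean document; each statement's English description precedes it below -/
import Mathlib

section
/- Let B be a Boolean algebra and let Ω ⊆ B be a subset closed under meet, join and complement and containing the top element. Any finitely additive function μ₀ : Ω → [0,1] with μ₀(⊤) = 1 extends to a finitely additive probability measure on all of B. -/
/-!
Send `b ∈ B` to its "Stone function" `J ↦ δ_J(b)` on the prime ideals `J` of `B`, where
`δ_J(b) = 0` iff `b ∈ J`. On finitely many elements of `Ω`, `μ₀` is a convex combination of
such two-valued measures `δ_J` (the weights are the values of `μ₀` on the minterms), so the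
linear functional `c ↦ ∑ c_a μ₀(a)` on formal combinations of elements of `Ω` is dominated by
the sublinear functional `c ↦ sup_J ∑ c_a δ_J(a)`. Hahn–Banach extends it to all formal
combinations of elements of `B` under the same bound, and any functional so dominated is,
like every `δ_J`, `[0, 1]`-valued and finitely additive on the generators `b`.
-/

open Finsupp

section SupOfLinearMaps

variable {ι E : Type*} [AddCommGroup E] [Module ℝ E]

theorem LinearPMap.exists_extension_of_bounded_by_family [Nonempty ι] (φ : ι → E →ₗ[ℝ] ℝ)
    (hφ : ∀ x, BddAbove (Set.range fun i => φ i x)) (f : E →ₗ.[ℝ] ℝ)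
    (hf : ∀ (x : f.domain) (r : ℝ), (∀ i, φ i x ≤ r) → f x ≤ r) :
    ∃ g : E →ₗ[ℝ] ℝ, (∀ x : f.domain, g x = f x) ∧ ∀ x r, (∀ i, φ i x ≤ r) → g x ≤ r := by
  have N_add (x y : E) : ⨆ i, φ i (x + y) ≤ (⨆ i, φ i x) + ⨆ i, φ i y :=
    ciSup_le fun i => by
      rw [LinearMap.map_add]; exact add_le_add (le_ciSup (hφ x) i) (le_ciSup (hφ y) i)
  have N_hom (c : ℝ) (hc : 0 < c) (x : E) : ⨆ i, φ i (c • x) = c * ⨆ i, φ i x := by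
    simp [Real.mul_iSup_of_nonneg hc.le]
  obtain ⟨g, hgf, hgN⟩ := exists_extension_of_le_sublinear f (fun x => ⨆ i, φ i x) N_hom N_add
    fun x => hf x _ fun i => le_ciSup (hφ x) i
  exact ⟨g, hgf, fun x r hr => (hgN x).trans (ciSup_le hr)⟩

theorem LinearMap.mem_Icc_of_forall_mem_Icc {φ : ι → E →ₗ[ℝ] ℝ} {g : E →ₗ[ℝ] ℝ}
    (hg : ∀ x r, (∀ i, φ i x ≤ r) → g x ≤ r) {x : E} {p q : ℝ}
    (hx : ∀ i, φ i x ∈ Set.Icc p q) : g x ∈ Set.Icc p q := by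
  have hneg : g (-x) ≤ -p := hg (-x) (-p) fun i => by simpa using (hx i).1
  exact ⟨by simpa using hneg, hg x q fun i => (hx i).2⟩

end SupOfLinearMaps

section BooleanAlgebra

variable {B : Type*} [BooleanAlgebra B]

variable (B) in
abbrev PrimeIdeal := {J : Order.Ideal B // J.IsPrime}

namespace PrimeIdeal

open Classical in
/-- The two-valued measure of the ultrafilter complementary to `J`. -/
noncomputable def dirac (J : PrimeIdeal B) (a : B) : ℝ := if a ∈ J.1 then 0 else 1

theorem exists_notMem {e : B} (he : e ≠ ⊥) : ∃ J : PrimeIdeal B, e ∉ J.1 := by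
  have hd : Disjoint (Order.PFilter.principal e : Set B) (Order.Ideal.principal (⊥ : B) : Set B) :=
    Set.disjoint_left.2 fun x hex hxbot =>
      he (le_bot_iff.1 ((Order.PFilter.mem_principal.1 hex).trans (Order.Ideal.mem_principal.1 hxbot)))
  obtain ⟨J, hJ, -, hdisj⟩ := DistribLattice.prime_ideal_of_disjoint_filter_ideal hd
  exact ⟨⟨J, hJ⟩, Set.disjoint_left.1 hdisj (Order.PFilter.mem_principal.2 le_rfl)⟩

instance [Nontrivial B] : Nonempty (PrimeIdeal B) :=
  (exists_notMem (top_ne_bot (α := B))).nonempty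

theorem dirac_mem_Icc (J : PrimeIdeal B) (a : B) : J.dirac a ∈ Set.Icc (0 : ℝ) 1 := by
  unfold dirac; split <;> norm_num

theorem dirac_sup (J : PrimeIdeal B) {a b : B} (hab : Disjoint a b) :
    J.dirac (a ⊔ b) = J.dirac a + J.dirac b := by
  have hor : a ∈ J.1 ∨ b ∈ J.1 := J.2.mem_or_mem (by rw [disjoint_iff.1 hab]; exact J.1.bot_mem)
  unfold dirac
  by_cases ha : a ∈ J.1 <;> by_cases hb : b ∈ J.1 <;> simp_all [Order.Ideal.sup_mem_iff]

end PrimeIdeal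

def minterm [DecidableEq B] (s t : Finset B) : B := s.inf fun a => if a ∈ t then a else aᶜ

section Minterm

variable [DecidableEq B] {s t : Finset B} {a : B}

theorem minterm_mem {A : BooleanSubalgebra B} (hs : ↑s ⊆ (A : Set B)) : minterm s t ∈ A :=
  Finset.inf_induction A.top_mem (fun _ h₁ _ h₂ => A.inf_mem h₁ h₂) fun a ha => by
    split
    · exact hs ha
    · exact A.compl_mem (hs ha)

theorem minterm_le (has : a ∈ s) : minterm s t ≤ if a ∈ t then a else aᶜ :=
  Finset.inf_le has

theorem minterm_insert : minterm (insert a s) t = (if a ∈ t then a else aᶜ) ⊓ minterm s t :=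
  Finset.inf_insert

theorem minterm_insert_of_notMem (has : a ∉ s) : minterm s (insert a t) = minterm s t :=
  Finset.inf_congr rfl fun b hb => by
    rw [if_congr (Finset.mem_insert.trans (or_iff_right (ne_of_mem_of_not_mem hb has))) rfl rfl]

theorem inf_minterm (has : a ∈ s) : a ⊓ minterm s t = if a ∈ t then minterm s t else ⊥ := by
  have hle := minterm_le (t := t) has
  split_ifs at hle ⊢ with hat
  · exact inf_eq_right.2 hle
  · exact disjoint_iff.1 (disjoint_compl_right.mono_right hle)

theorem PrimeIdeal.dirac_of_minterm_notMem {J : PrimeIdeal B} (hJ : minterm s t ∉ J.1)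
    (has : a ∈ s) : J.dirac a = if a ∈ t then 1 else 0 := by
  have hle := minterm_le (t := t) has
  unfold dirac
  by_cases hat : a ∈ t
  · rw [if_pos hat] at hle
    simpa [hat] using fun haJ => hJ (J.1.lower hle haJ)
  · rw [if_neg hat] at hle
    simp [hat, J.2.mem_or_compl_mem.resolve_right fun h => hJ (J.1.lower hle h)]

end Minterm

def IsAdditiveOn (μ : B → ℝ) (s : Set B) : Prop :=
  ∀ ⦃a⦄, a ∈ s → ∀ ⦃b⦄, b ∈ s → Disjoint a b → μ (a ⊔ b) = μ a + μ b

namespace IsAdditiveOn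

variable {A : BooleanSubalgebra B} {μ : B → ℝ}

theorem map_bot (hμ : IsAdditiveOn μ A) : μ ⊥ = 0 := by
  have h := hμ A.bot_mem A.bot_mem disjoint_bot_left
  rw [bot_sup_eq] at h
  linarith

theorem nontrivial (hμ : IsAdditiveOn μ A) (h1 : μ ⊤ = 1) : Nontrivial B :=
  nontrivial_of_ne ⊤ ⊥ fun h => by simp [h, hμ.map_bot] at h1

theorem inf_add_inf_compl (hμ : IsAdditiveOn μ A) {x a : B} (hx : x ∈ A) (ha : a ∈ A) :
    μ (x ⊓ a) + μ (x ⊓ aᶜ) = μ x := by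
  rw [← hμ (A.inf_mem hx ha) (A.inf_mem hx (A.compl_mem ha))
    (disjoint_compl_right.mono inf_le_right inf_le_right), sup_inf_inf_compl]

theorem eq_sum_minterm [DecidableEq B] (hμ : IsAdditiveOn μ A) {b : B} (hb : b ∈ A)
    {s : Finset B} (hs : ↑s ⊆ (A : Set B)) :
    μ b = ∑ t ∈ s.powerset, μ (b ⊓ minterm s t) := by
  induction s using Finset.induction_on with
  | empty => simp [minterm]
  | insert a s has ih =>
    rw [Finset.coe_insert, Set.insert_subset_iff] at hs
    rw [Finset.sum_powerset_insert has, ← Finset.sum_add_distrib, ih hs.2]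
    refine Finset.sum_congr rfl fun t ht => ?_
    have hat : a ∉ t := fun h => has (Finset.mem_powerset.1 ht h)
    rw [minterm_insert, minterm_insert, minterm_insert_of_notMem has, if_neg hat,
      if_pos (Finset.mem_insert_self a t), inf_left_comm, inf_left_comm b a, add_comm,
      inf_comm aᶜ, inf_comm a, hμ.inf_add_inf_compl (A.inf_mem hb (minterm_mem hs.2)) hs.1]

theorem exists_convexCombination_dirac (hμ : IsAdditiveOn μ A) (h0 : ∀ a ∈ A, 0 ≤ μ a)
    (h1 : μ ⊤ = 1) {s : Finset B} (hs : ↑s ⊆ (A : Set B)) :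
    ∃ (w : Finset B → ℝ) (J : Finset B → PrimeIdeal B), (∀ t, 0 ≤ w t) ∧
      ∑ t ∈ s.powerset, w t = 1 ∧ ∀ a ∈ s, μ a = ∑ t ∈ s.powerset, w t * (J t).dirac a := by
  classical
  have := hμ.nontrivial h1
  have hJ (t : Finset B) : ∃ J : PrimeIdeal B, minterm s t = ⊥ ∨ minterm s t ∉ J.1 := by
    by_cases ht : minterm s t = ⊥
    · exact ⟨Classical.arbitrary _, .inl ht⟩
    · exact (PrimeIdeal.exists_notMem ht).imp fun _ => .inr
  choose J hJ using hJ
  refine ⟨fun t => μ (minterm s t), J, fun t => h0 _ (minterm_mem hs), ?_, fun a ha => ?_⟩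
  · simpa [h1] using (hμ.eq_sum_minterm A.top_mem hs).symm
  · rw [hμ.eq_sum_minterm (hs ha) hs]
    refine Finset.sum_congr rfl fun t _ => ?_
    rcases hJ t with ht | ht
    · simp [ht, hμ.map_bot]
    · rw [inf_minterm ha, PrimeIdeal.dirac_of_minterm_notMem ht ha]
      split_ifs <;> simp [hμ.map_bot]

theorem linearCombination_le (hμ : IsAdditiveOn μ A) (h0 : ∀ a ∈ A, 0 ≤ μ a) (h1 : μ ⊤ = 1)
    {c : B →₀ ℝ} (hc : ↑c.support ⊆ (A : Set B)) {r : ℝ}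
    (hr : ∀ J : PrimeIdeal B, linearCombination ℝ J.dirac c ≤ r) :
    linearCombination ℝ μ c ≤ r := by
  obtain ⟨w, J, hw0, hw1, hμJ⟩ := hμ.exists_convexCombination_dirac h0 h1 hc
  calc linearCombination ℝ μ c
      = ∑ t ∈ c.support.powerset, w t * linearCombination ℝ (J t).dirac c := by
        simp only [linearCombination_apply, Finsupp.sum, smul_eq_mul, Finset.mul_sum]
        rw [Finset.sum_comm]
        refine Finset.sum_congr rfl fun a ha => ?_
        rw [hμJ a ha, Finset.mul_sum]
        exact Finset.sum_congr rfl fun t _ => by ring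
    _ ≤ ∑ t ∈ c.support.powerset, w t * r :=
        Finset.sum_le_sum fun t _ => mul_le_mul_of_nonneg_left (hr (J t)) (hw0 t)
    _ = r := by rw [← Finset.sum_mul, hw1, one_mul]

theorem exists_extension_le_dirac (hμ : IsAdditiveOn μ A) (h0 : ∀ a ∈ A, 0 ≤ μ a) (h1 : μ ⊤ = 1) :
    ∃ g : (B →₀ ℝ) →ₗ[ℝ] ℝ, (∀ a ∈ A, g (single a 1) = μ a) ∧
      ∀ x r, (∀ J : PrimeIdeal B, linearCombination ℝ J.dirac x ≤ r) → g x ≤ r := by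
  have := hμ.nontrivial h1
  have hbdd (x : B →₀ ℝ) :
      BddAbove (Set.range fun J : PrimeIdeal B => linearCombination ℝ J.dirac x) := by
    refine ⟨∑ a ∈ x.support, |x a|, Set.forall_mem_range.2 fun J => ?_⟩
    simp only [linearCombination_apply, Finsupp.sum, smul_eq_mul]
    refine Finset.sum_le_sum fun a _ => ?_
    obtain ⟨hJ0, hJ1⟩ := J.dirac_mem_Icc a
    calc x a * J.dirac a ≤ |x a| * J.dirac a := mul_le_mul_of_nonneg_right (le_abs_self _) hJ0
      _ ≤ |x a| := mul_le_of_le_one_right (abs_nonneg _) hJ1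
  obtain ⟨g, hgμ, hg⟩ := LinearPMap.exists_extension_of_bounded_by_family
    (fun J : PrimeIdeal B => linearCombination ℝ J.dirac) hbdd
    ⟨supported ℝ ℝ (A : Set B), (linearCombination ℝ μ).domRestrict _⟩
    fun x r hr => hμ.linearCombination_le h0 h1 ((mem_supported ℝ _).1 x.2) hr
  refine ⟨g, fun a ha => ?_, hg⟩
  simpa using hgμ ⟨single a 1, single_mem_supported ℝ 1 ha⟩

end IsAdditiveOn

end BooleanAlgebra

theorem extend_finitely_additive_from_subset
    {B : Type*} [BooleanAlgebra B] (Ω : Set B)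
    (htop : (⊤ : B) ∈ Ω)
    (hmeet : ∀ a b, a ∈ Ω → b ∈ Ω → a ⊓ b ∈ Ω)
    (hjoin : ∀ a b, a ∈ Ω → b ∈ Ω → a ⊔ b ∈ Ω)
    (hcompl : ∀ a, a ∈ Ω → aᶜ ∈ Ω)
    (μ₀ : B → ℝ)
    (hrange : ∀ a ∈ Ω, μ₀ a ∈ Set.Icc (0:ℝ) 1)
    (hone : μ₀ ⊤ = 1)
    (hadd : ∀ a b, a ∈ Ω → b ∈ Ω → a ⊓ b = ⊥ → μ₀ (a ⊔ b) = μ₀ a + μ₀ b) :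
    ∃ μ : B → ℝ, (∀ a, μ a ∈ Set.Icc (0:ℝ) 1) ∧ μ ⊤ = 1 ∧
      (∀ a b, a ⊓ b = ⊥ → μ (a ⊔ b) = μ a + μ b) ∧
      (∀ a ∈ Ω, μ a = μ₀ a) := by
  let A : BooleanSubalgebra B :=
    { carrier := Ω
      supClosed' := fun a ha b hb => hjoin a b ha hb
      infClosed' := fun a ha b hb => hmeet a b ha hb
      compl_mem' := hcompl _
      bot_mem' := by simpa using hcompl ⊤ htop }
  have hμ₀ : IsAdditiveOn μ₀ A := fun a ha b hb hab => hadd a b ha hb (disjoint_iff.1 hab)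
  obtain ⟨g, hgμ₀, hg⟩ := hμ₀.exists_extension_le_dirac (fun a ha => (hrange a ha).1) hone
  refine ⟨fun b => g (single b 1), fun b => ?_, (hgμ₀ ⊤ htop).trans hone, fun a b hab => ?_, hgμ₀⟩
  · exact LinearMap.mem_Icc_of_forall_mem_Icc hg fun J => by simpa using J.dirac_mem_Icc b
  · have hdiff := LinearMap.mem_Icc_of_forall_mem_Icc hg (p := 0) (q := 0)
      (x := single (a ⊔ b) 1 - (single a 1 + single b 1)) fun J => by
        simp [J.dirac_sup (disjoint_iff.2 hab)]
    simp only [Set.Icc_self, Set.mem_singleton_iff, map_sub, map_add, sub_eq_zero] at hdiff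
    exact hdiff
end

section
/- Let X be a compact Hausdorff totally disconnected topological space (a Stone space). Every finitely additive probability measure on the Boolean algebra of clopen subsets of X extends uniquely to a regular Borel probability measure on X. -/
open MeasureTheory

/-- In a compact Hausdorff totally disconnected space, a compact set inside an open set
can be separated by a clopen set. -/
lemma exists_isClopen_between {X : Type*} [TopologicalSpace X] [CompactSpace X] [T2Space X]
    [TotallyDisconnectedSpace X] {K U : Set X} (hK : IsCompact K) (hU : IsOpen U)
    (hKU : K ⊆ U) : ∃ V : Set X, IsClopen V ∧ K ⊆ V ∧ V ⊆ U := by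
  have h : ∀ x ∈ K, ∃ V : Set X, IsClopen V ∧ x ∈ V ∧ V ⊆ U := fun x hx =>
    compact_exists_isClopen_in_isOpen hU (hKU hx)
  choose! V hVc hxV hVU using h
  obtain ⟨t, htK, htcov⟩ := hK.elim_nhds_subcover V fun x hx =>
    ((hVc x hx).2).mem_nhds (hxV x hx)
  refine ⟨⋃ x ∈ t, V x, ?_, htcov, ?_⟩
  · exact t.finite_toSet.isClopen_biUnion fun x hx => hVc x (htK x hx)
  · exact Set.iUnion₂_subset fun x hx => hVU x (htK x hx)

theorem clopen_measure_extends_uniquely_to_regular_borel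
    {X : Type*} [TopologicalSpace X] [CompactSpace X] [T2Space X]
    [TotallyDisconnectedSpace X] [MeasurableSpace X] [BorelSpace X]
    (μ₀ : Set X → ℝ)
    (hrange : ∀ s, IsClopen s → μ₀ s ∈ Set.Icc (0:ℝ) 1)
    (huniv : μ₀ Set.univ = 1)
    (hadd : ∀ s t, IsClopen s → IsClopen t → s ∩ t = ∅ → μ₀ (s ∪ t) = μ₀ s + μ₀ t) :
    ∃! μ : Measure X, IsProbabilityMeasure μ ∧ μ.OuterRegular ∧
      ∀ s, IsClopen s → μ s = ENNReal.ofReal (μ₀ s) := by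
  classical
  -- monotonicity of μ₀ on clopen sets
  have hmono₀ : ∀ s t, IsClopen s → IsClopen t → s ⊆ t → μ₀ s ≤ μ₀ t := by
    intro s t hs ht hst
    have hdiff : IsClopen (t \ s) := ht.diff hs
    have h1 : μ₀ t = μ₀ s + μ₀ (t \ s) := by
      rw [← hadd s (t \ s) hs hdiff (Set.inter_diff_self s t),
        Set.union_diff_cancel hst]
    have h2 : 0 ≤ μ₀ (t \ s) := (hrange _ hdiff).1
    linarith
  -- subadditivity on clopen sets
  have hsub₀ : ∀ s t, IsClopen s → IsClopen t → μ₀ (s ∪ t) ≤ μ₀ s + μ₀ t := by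
    intro s t hs ht
    have hdiff : IsClopen (t \ s) := ht.diff hs
    have h1 : μ₀ (s ∪ t) = μ₀ s + μ₀ (t \ s) := by
      rw [← hadd s (t \ s) hs hdiff (Set.inter_diff_self s t), Set.union_diff_self]
    have h2 : μ₀ (t \ s) ≤ μ₀ t := hmono₀ _ _ hdiff ht Set.diff_subset
    linarith
  -- the approximating infimum
  set f : Set X → ℝ := fun K => sInf (μ₀ '' {D | IsClopen D ∧ K ⊆ D}) with hf
  have hne : ∀ K : Set X, (μ₀ '' {D | IsClopen D ∧ K ⊆ D}).Nonempty := fun K =>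
    ⟨μ₀ Set.univ, Set.univ, ⟨isClopen_univ, Set.subset_univ _⟩, rfl⟩
  have hbdd : ∀ K : Set X, BddBelow (μ₀ '' {D | IsClopen D ∧ K ⊆ D}) := by
    intro K
    refine ⟨0, ?_⟩
    rintro a ⟨D, ⟨hD, _⟩, rfl⟩
    exact (hrange D hD).1
  have f_le : ∀ (K D : Set X), IsClopen D → K ⊆ D → f K ≤ μ₀ D := fun K D hD hKD =>
    csInf_le (hbdd K) ⟨D, ⟨hD, hKD⟩, rfl⟩
  have f_nonneg : ∀ K : Set X, 0 ≤ f K := by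
    intro K
    apply le_csInf (hne K)
    rintro a ⟨D, ⟨hD, _⟩, rfl⟩
    exact (hrange D hD).1
  have f_mono : ∀ K₁ K₂ : Set X, K₁ ⊆ K₂ → f K₁ ≤ f K₂ := by
    intro K₁ K₂ h
    apply csInf_le_csInf (hbdd K₁) (hne K₂)
    rintro a ⟨D, ⟨hD, hKD⟩, rfl⟩
    exact ⟨D, ⟨hD, h.trans hKD⟩, rfl⟩
  have f_clopen : ∀ s : Set X, IsClopen s → f s = μ₀ s := by
    intro s hs
    refine le_antisymm (f_le s s hs subset_rfl) ?_
    apply le_csInf (hne s)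
    rintro a ⟨D, ⟨hD, hsD⟩, rfl⟩
    exact hmono₀ s D hs hD hsD
  have f_union_le : ∀ K₁ K₂ : Set X, f (K₁ ∪ K₂) ≤ f K₁ + f K₂ := by
    intro K₁ K₂
    refine le_of_forall_pos_le_add ?_
    intro ε hε
    obtain ⟨a₁, ⟨D₁, ⟨hD₁, hKD₁⟩, rfl⟩, ha₁⟩ :=
      exists_lt_of_csInf_lt (hne K₁) (show f K₁ < f K₁ + ε / 2 by linarith)
    obtain ⟨a₂, ⟨D₂, ⟨hD₂, hKD₂⟩, rfl⟩, ha₂⟩ :=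
      exists_lt_of_csInf_lt (hne K₂) (show f K₂ < f K₂ + ε / 2 by linarith)
    have h1 : f (K₁ ∪ K₂) ≤ μ₀ (D₁ ∪ D₂) :=
      f_le _ _ (hD₁.union hD₂) (Set.union_subset_union hKD₁ hKD₂)
    have h2 : μ₀ (D₁ ∪ D₂) ≤ μ₀ D₁ + μ₀ D₂ := hsub₀ _ _ hD₁ hD₂
    linarith
  have f_disjoint : ∀ K₁ K₂ : Set X, IsCompact K₁ → IsCompact K₂ → IsClosed K₂ →
      Disjoint K₁ K₂ → f K₁ + f K₂ ≤ f (K₁ ∪ K₂) := by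
    intro K₁ K₂ hK₁ _hK₂ hK₂c hdisj
    obtain ⟨V, hV, hK₁V, hVK₂⟩ := exists_isClopen_between hK₁ hK₂c.isOpen_compl
      hdisj.subset_compl_right
    apply le_csInf (hne _)
    rintro a ⟨D, ⟨hD, hKD⟩, rfl⟩
    have hDV : IsClopen (D ∩ V) := hD.inter hV
    have hDVc : IsClopen (D ∩ Vᶜ) := hD.inter hV.compl
    have hsplit : μ₀ D = μ₀ (D ∩ V) + μ₀ (D ∩ Vᶜ) := by
      rw [← hadd (D ∩ V) (D ∩ Vᶜ) hDV hDVc]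
      · rw [Set.inter_union_compl]
      · ext x; simp; tauto
    have h1 : f K₁ ≤ μ₀ (D ∩ V) :=
      f_le _ _ hDV (Set.subset_inter (fun x hx => hKD (Or.inl hx)) hK₁V)
    have h2 : f K₂ ≤ μ₀ (D ∩ Vᶜ) := by
      refine f_le _ _ hDVc (Set.subset_inter (fun x hx => hKD (Or.inr hx)) ?_)
      intro x hx hxV
      exact hVK₂ hxV hx
    linarith
  -- the content
  set C : Content X :=
    { toFun := fun K => (f K).toNNReal
      mono' := fun K₁ K₂ h => Real.toNNReal_mono (f_mono _ _ h)
      sup_disjoint' := by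
        intro K₁ K₂ hdisj _h₁ h₂
        have heq : f ((K₁ ⊔ K₂ : TopologicalSpace.Compacts X) : Set X) = f K₁ + f K₂ := by
          rw [TopologicalSpace.Compacts.coe_sup]
          exact le_antisymm (f_union_le _ _)
            (f_disjoint _ _ K₁.2 K₂.2 h₂ hdisj)
        show (f ((K₁ ⊔ K₂ : TopologicalSpace.Compacts X) : Set X)).toNNReal =
          (f (K₁ : Set X)).toNNReal + (f (K₂ : Set X)).toNNReal
        rw [heq, Real.toNNReal_add (f_nonneg _) (f_nonneg _)]
      sup_le' := by
        intro K₁ K₂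
        have : f ((K₁ ⊔ K₂ : TopologicalSpace.Compacts X) : Set X) ≤ f K₁ + f K₂ := by
          rw [TopologicalSpace.Compacts.coe_sup]; exact f_union_le _ _
        show (f ((K₁ ⊔ K₂ : TopologicalSpace.Compacts X) : Set X)).toNNReal ≤
          (f (K₁ : Set X)).toNNReal + (f (K₂ : Set X)).toNNReal
        calc (f ((K₁ ⊔ K₂ : TopologicalSpace.Compacts X) : Set X)).toNNReal
            ≤ (f K₁ + f K₂).toNNReal := Real.toNNReal_mono this
          _ ≤ (f K₁).toNNReal + (f K₂).toNNReal := by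
              rw [Real.toNNReal_add (f_nonneg _) (f_nonneg _)] } with hC
  set μ : Measure X := C.measure with hμ
  -- μ agrees with μ₀ on clopen sets
  have hμclopen : ∀ s : Set X, IsClopen s → μ s = ENNReal.ofReal (μ₀ s) := by
    intro s hs
    have hcpt : IsCompact s := hs.isClosed.isCompact
    have h1 : μ s = C.innerContent ⟨s, hs.isOpen⟩ := by
      rw [hμ, C.measure_apply hs.isOpen.measurableSet, C.outerMeasure_of_isOpen s hs.isOpen]
    have h2 : C.innerContent ⟨s, hs.isOpen⟩ = C ⟨s, hcpt⟩ := by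
      refine le_antisymm ?_ (C.le_innerContent ⟨s, hcpt⟩ ⟨s, hs.isOpen⟩ subset_rfl)
      exact iSup₂_le fun K hK => C.mono K ⟨s, hcpt⟩ hK
    have h3 : (C ⟨s, hcpt⟩ : ENNReal) = ENNReal.ofReal (μ₀ s) := by
      show ((f s).toNNReal : ENNReal) = ENNReal.ofReal (μ₀ s)
      rw [f_clopen s hs]
      rfl
    rw [h1, h2, h3]
  have hμprob : IsProbabilityMeasure μ := by
    constructor
    rw [hμclopen Set.univ isClopen_univ, huniv, ENNReal.ofReal_one]
  have hμreg : μ.OuterRegular := C.outerRegular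
  -- key uniqueness computation: any such measure is determined on open sets
  have key : ∀ (m : Measure X), IsProbabilityMeasure m → m.OuterRegular →
      (∀ s, IsClopen s → m s = ENNReal.ofReal (μ₀ s)) → ∀ U : Set X, IsOpen U →
      m U = 1 - ⨅ (W : Set X) (_ : IsClopen W) (_ : Uᶜ ⊆ W), ENNReal.ofReal (μ₀ W) := by
    intro m hm hreg hcl U hU
    have hUc : MeasurableSet Uᶜ := hU.isClosed_compl.measurableSet
    have h1 : m Uᶜ = ⨅ (W : Set X) (_ : IsClopen W) (_ : Uᶜ ⊆ W), ENNReal.ofReal (μ₀ W) := by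
      apply le_antisymm
      · refine le_iInf fun W => le_iInf fun hW => le_iInf fun hsubW => ?_
        rw [← hcl W hW]
        exact measure_mono hsubW
      · rw [Set.measure_eq_iInf_isOpen Uᶜ m]
        refine le_iInf fun V => le_iInf fun hsubV => le_iInf fun hV => ?_
        obtain ⟨W, hW, hUW, hWV⟩ :=
          exists_isClopen_between hU.isClosed_compl.isCompact hV hsubV
        refine le_trans (iInf_le_of_le W (iInf_le_of_le hW (iInf_le _ hUW))) ?_
        rw [← hcl W hW]
        exact measure_mono hWV
    have h2 : m U = m Set.univ - m Uᶜ := by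
      have := measure_compl hUc (measure_ne_top m Uᶜ)
      rwa [compl_compl] at this
    rw [h2, h1, measure_univ]
  refine ⟨μ, ⟨hμprob, hμreg, hμclopen⟩, ?_⟩
  rintro ν ⟨hνprob, hνreg, hνclopen⟩
  have hopen : ∀ U : Set X, IsOpen U → ν U = μ U := by
    intro U hU
    rw [key ν hνprob hνreg hνclopen U hU, key μ hμprob hμreg hμclopen U hU]
  refine Measure.ext fun s hs => ?_
  have h1 : ν s = ⨅ (U : Set X) (_ : s ⊆ U) (_ : IsOpen U), ν U :=
    Set.measure_eq_iInf_isOpen s ν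
  have h2 : μ s = ⨅ (U : Set X) (_ : s ⊆ U) (_ : IsOpen U), μ U :=
    Set.measure_eq_iInf_isOpen s μ
  rw [h1, h2]
  exact iInf_congr fun U => iInf_congr fun _ => iInf_congr fun hU => hopen U hU
end
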